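/- Assume c ∈ (0,1) and C0 ≥ 1 are constants such that |K_{w'}(i)| ≤ C0·binom(n,w')·(1 − 2w'/n)^i for all integers 0 ≤ w' ≤ c·n and 0 ≤ i ≤ n/2. Let C be an [n,k] linear binary code with generator matrix G and dual distance d⊥ < n/2; set t⊥ = ⌊(d⊥−1)/2⌋. Let w be an integer with 0 ≤ w ≤ c·n, ε > 0, and let Z be a random vector on F_2^n with pmf P_Z satisfying d_TV(P_{GZ}, U_k) ≤ ε. Then (1/binom(n,w))·Σ_{x : |x| = w} (2^n·P̂_Z(x))^2 ≤ |C⊥|·V_n(t⊥)/2^{n−1} + C0·n·(1 − 2w/n)^{t⊥} + 2ε. -/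

import Mathlib

open Finset Filter
open scoped Classical BigOperators Topology

abbrev BV (n : ℕ) := Fin n → ZMod 2

def wt {n : ℕ} (x : BV n) : ℕ := (Finset.univ.filter (fun i => x i ≠ 0)).card

def dotp {n : ℕ} (x y : BV n) : ZMod 2 := ∑ i, x i * y i

def IsPMF {α : Type*} [Fintype α] (P : α → ℝ) : Prop :=
  (∀ x, 0 ≤ P x) ∧ ∑ x, P x = 1

noncomputable def dTV {α : Type*} [Fintype α] (P Q : α → ℝ) : ℝ :=
  (1/2) * ∑ x, |P x - Q x|

noncomputable def unif (α : Type*) [Fintype α] : α → ℝ := fun _ => 1 / (Fintype.card α)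

noncomputable def unifOn {α : Type*} [Fintype α] (S : Set α) : α → ℝ :=
  fun x => if x ∈ S then 1 / (Nat.card S) else 0

noncomputable def conv {n : ℕ} (P Q : BV n → ℝ) : BV n → ℝ :=
  fun x => ∑ y, P y * Q (x - y)

noncomputable def FT {n : ℕ} (f : BV n → ℝ) : BV n → ℝ :=
  fun y => (1 / 2^n) * ∑ x, f x * (if dotp x y = 0 then (1:ℝ) else -1)

noncomputable def Kraw (n w i : ℕ) : ℝ :=
  ∑ j ∈ Finset.range (w+1), (-1:ℝ)^j * (Nat.choose i j) * (Nat.choose (n-i) (w-j))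

def Vball (n t : ℕ) : ℕ := ∑ j ∈ Finset.range (t+1), Nat.choose n j

noncomputable def pmfMap {m n : ℕ} (G : Matrix (Fin m) (Fin n) (ZMod 2)) (P : BV n → ℝ) :
    BV m → ℝ :=
  fun u => ∑ z ∈ Finset.univ.filter (fun z => G.mulVec z = u), P z

noncomputable def biasOf {n : ℕ} (e : BV n) (P : BV n → ℝ) : ℝ :=
  1/2 - ∑ z ∈ Finset.univ.filter (fun z => dotp e z = 1), P z

noncomputable def bitPMF {n : ℕ} (e : BV n) (P : BV n → ℝ) : ZMod 2 → ℝ :=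
  fun b => ∑ z ∈ Finset.univ.filter (fun z => dotp e z = b), P z

noncomputable def jointPMF {m n : ℕ} (G : Matrix (Fin m) (Fin n) (ZMod 2)) (e : BV n)
    (P : BV n → ℝ) : BV m × ZMod 2 → ℝ :=
  fun p => ∑ z ∈ Finset.univ.filter (fun z => G.mulVec z = p.1 ∧ dotp e z = p.2), P z

noncomputable def prodPMF {m : ℕ} (Pb : ZMod 2 → ℝ) : BV m × ZMod 2 → ℝ :=
  fun p => (1 / 2^m) * Pb p.2

def dualSet {n : ℕ} (C : Set (BV n)) : Set (BV n) := {y | ∀ c ∈ C, dotp y c = 0}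

def rowSpan {k n : ℕ} (G : Matrix (Fin k) (Fin n) (ZMod 2)) : Submodule (ZMod 2) (BV n) :=
  Submodule.span (ZMod 2) (Set.range (fun i => G i))


/-!
Expanding the square, `∑_{|x| = w} (2ⁿ P̂(x))² = ∑_{z, z'} P(z) P(z') K_w(|z + z'|)`. We bound
`K_w(i)` by `binom(n, w)` when `i ≤ t` or `n - i ≤ t`, and otherwise, through the symmetry
`|K_w(n - i)| = |K_w(i)|` and the assumed decay, by `C0 binom(n, w) (1 - 2w/n)^t`. The event
`|z + z' + a| ≤ t` forces `Gz'` into a translate of the image under `G` of a Hamming ball of radius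
`t`, a set of at most `V_n(t)` points; as `GZ` is `ε`-close to uniform, it has probability at most
`V_n(t) / 2^k + ε`. Finally `2^(n-k) ≤ |C⊥|` since `C⊥` contains the kernel of `G`.
-/

open Matrix

lemma ZMod.two_eq_zero_or_one : ∀ a : ZMod 2, a = 0 ∨ a = 1 := by decide

section BinaryVectors

variable {n : ℕ}

def supp (x : BV n) : Finset (Fin n) := univ.filter (x · ≠ 0)

lemma wt_eq_card_supp (x : BV n) : wt x = #(supp x) := rfl

lemma mem_supp {x : BV n} {i : Fin n} : i ∈ supp x ↔ x i = 1 := by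
  rcases ZMod.two_eq_zero_or_one (x i) with h | h <;> simp [supp, h]

def suppEquiv : BV n ≃ Finset (Fin n) where
  toFun := supp
  invFun A i := if i ∈ A then 1 else 0
  left_inv x := by
    funext i
    rcases ZMod.two_eq_zero_or_one (x i) with h | h <;> simp [mem_supp, h]
  right_inv A := by ext i; by_cases h : i ∈ A <;> simp [mem_supp, h]

@[simp] lemma suppEquiv_apply (x : BV n) : suppEquiv x = supp x := rfl

@[simp] lemma supp_suppEquiv_symm (A : Finset (Fin n)) : supp (suppEquiv.symm A) = A :=
  suppEquiv.apply_symm_apply A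

lemma wt_le (x : BV n) : wt x ≤ n := by
  simpa [wt_eq_card_supp] using card_le_univ (supp x)

lemma one_le_wt {x : BV n} (hx : x ≠ 0) : 1 ≤ wt x := by
  by_contra! h
  refine hx (suppEquiv.injective ?_)
  have : supp (0 : BV n) = ∅ := by ext; simp [supp]
  simpa [wt_eq_card_supp, this] using h

lemma dotp_comm (x y : BV n) : dotp x y = dotp y x := by
  simp only [dotp, mul_comm]

lemma dotp_add_left (x y z : BV n) : dotp (x + y) z = dotp x z + dotp y z := by
  simp only [dotp, Pi.add_apply, add_mul, sum_add_distrib]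

lemma dotp_eq_card_inter (x y : BV n) : dotp x y = (#(supp x ∩ supp y) : ZMod 2) := by
  have h : ∀ i, x i * y i = if i ∈ supp x ∩ supp y then 1 else 0 := fun i => by
    rcases ZMod.two_eq_zero_or_one (x i) with hx | hx <;>
      rcases ZMod.two_eq_zero_or_one (y i) with hy | hy <;> simp [mem_supp, hx, hy]
  simp only [dotp, h, sum_boole, filter_mem_eq_inter, univ_inter]

def hammingSphere (n w : ℕ) : Finset (BV n) := univ.filter (wt · = w)

def hammingBall (n t : ℕ) : Finset (BV n) := univ.filter (wt · ≤ t)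

@[simp] lemma mem_hammingSphere {w : ℕ} {x : BV n} : x ∈ hammingSphere n w ↔ wt x = w := by
  simp [hammingSphere]

@[simp] lemma mem_hammingBall {t : ℕ} {x : BV n} : x ∈ hammingBall n t ↔ wt x ≤ t := by
  simp [hammingBall]

lemma sum_hammingSphere {M : Type*} [AddCommMonoid M] (w : ℕ) (f : BV n → M) :
    ∑ x ∈ hammingSphere n w, f x = ∑ A ∈ powersetCard w univ, f (suppEquiv.symm A) := by
  refine sum_equiv suppEquiv (fun x => ?_) (fun x _ => by rw [Equiv.symm_apply_apply])
  simp [mem_powersetCard, wt_eq_card_supp]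

lemma card_hammingSphere (w : ℕ) : #(hammingSphere n w) = n.choose w := by
  simpa using sum_hammingSphere (n := n) (M := ℕ) w (fun _ => 1)

lemma card_hammingBall (t : ℕ) : #(hammingBall n t) = Vball n t := by
  simp only [Vball, ← card_hammingSphere]
  rw [← card_biUnion]
  · congr 1; ext x; simp
  · intro a _ b _ hab
    exact disjoint_filter.mpr fun x _ ha hb => hab (ha ▸ hb)

lemma BV.add_self (v : BV n) : v + v = 0 :=
  funext fun i => CharTwo.add_self_eq_zero (v i)

end BinaryVectors

section Walsh

variable {n : ℕ}

def walsh (x y : BV n) : ℝ := if dotp x y = 0 then 1 else -1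

lemma walsh_comm (x y : BV n) : walsh x y = walsh y x := by
  rw [walsh, walsh, dotp_comm]

lemma walsh_eq_neg_one_pow (x y : BV n) : walsh x y = (-1) ^ #(supp x ∩ supp y) := by
  simp only [walsh, dotp_eq_card_inter, ZMod.natCast_eq_zero_iff_even, neg_one_pow_eq_ite]

lemma walsh_add_left (x x' y : BV n) : walsh (x + x') y = walsh x y * walsh x' y := by
  rw [walsh, walsh, walsh, dotp_add_left]
  rcases ZMod.two_eq_zero_or_one (dotp x y) with h | h <;>
    rcases ZMod.two_eq_zero_or_one (dotp x' y) with h' | h' <;> simp [h, h']; decide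

lemma abs_walsh (x y : BV n) : |walsh x y| = 1 := by
  rw [walsh]; split_ifs <;> simp

lemma card_filter_card_inter_eq {α : Type*} [Fintype α] [DecidableEq α] (S : Finset α)
    {j w : ℕ} (hj : j ≤ w) :
    #{A ∈ powersetCard w univ | #(A ∩ S) = j}
      = (#S).choose j * (Fintype.card α - #S).choose (w - j) := by
  rw [← card_compl, ← card_powersetCard, ← card_powersetCard, ← card_product]
  refine card_nbij' (fun A => (A ∩ S, A \ S)) (fun p => p.1 ∪ p.2) ?_ ?_ ?_ ?_
  · intro A hA
    simp only [mem_coe, mem_filter, mem_powersetCard, subset_univ, true_and] at hA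
    simp only [mem_coe, mem_product, mem_powersetCard]
    refine ⟨⟨inter_subset_right, hA.2⟩, fun x hx => mem_compl.mpr (mem_sdiff.mp hx).2, ?_⟩
    have := card_inter_add_card_sdiff A S
    omega
  · rintro ⟨B, C⟩ h
    simp only [mem_coe, mem_product, mem_powersetCard] at h
    simp only [mem_coe, mem_filter, mem_powersetCard, subset_univ, true_and]
    have hBC : Disjoint B C :=
      disjoint_of_subset_left h.1.1 (subset_compl_iff_disjoint_left.mp h.2.1)
    have hCS : Disjoint C S := subset_compl_iff_disjoint_right.mp h.2.1
    rw [card_union_of_disjoint hBC, union_inter_distrib_right, inter_eq_left.mpr h.1.1,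
      disjoint_iff_inter_eq_empty.mp hCS, union_empty]
    omega
  · intro A _
    exact (union_comm _ _).trans (sdiff_union_inter A S)
  · rintro ⟨B, C⟩ h
    simp only [mem_coe, mem_product, mem_powersetCard] at h
    have hCS : Disjoint C S := subset_compl_iff_disjoint_right.mp h.2.1
    simp only [union_inter_distrib_right, inter_eq_left.mpr h.1.1,
      disjoint_iff_inter_eq_empty.mp hCS, union_empty, union_sdiff_distrib,
      sdiff_eq_empty_iff_subset.mpr h.1.1, sdiff_eq_self_of_disjoint hCS, empty_union]

lemma sum_hammingSphere_walsh (w : ℕ) (v : BV n) :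
    ∑ x ∈ hammingSphere n w, walsh x v = Kraw n w (wt v) := by
  have hmaps : ∀ A ∈ powersetCard w (univ : Finset (Fin n)), #(A ∩ supp v) ∈ range (w + 1) :=
    fun A hA => mem_range_succ_iff.mpr <|
      (card_le_card inter_subset_left).trans (mem_powersetCard.mp hA).2.le
  rw [sum_hammingSphere, ← sum_fiberwise_of_maps_to hmaps, Kraw]
  refine sum_congr rfl fun j hj => ?_
  rw [sum_congr rfl fun A hA => by
    rw [walsh_eq_neg_one_pow, supp_suppEquiv_symm, (mem_filter.mp hA).2]]
  rw [sum_const, card_filter_card_inter_eq _ (mem_range_succ_iff.mp hj), nsmul_eq_mul,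
    Fintype.card_fin, ← wt_eq_card_supp]
  push_cast
  ring

lemma exists_wt_eq {i : ℕ} (hi : i ≤ n) : ∃ v : BV n, wt v = i := by
  obtain ⟨A, -, hA⟩ := exists_subset_card_eq (s := (univ : Finset (Fin n))) (by simpa using hi)
  exact ⟨suppEquiv.symm A, by rw [wt_eq_card_supp, supp_suppEquiv_symm, hA]⟩

lemma abs_kraw_le_choose (w : ℕ) {i : ℕ} (hi : i ≤ n) : |Kraw n w i| ≤ n.choose w := by
  obtain ⟨v, rfl⟩ := exists_wt_eq hi
  rw [← sum_hammingSphere_walsh]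
  refine (abs_sum_le_sum_abs _ _).trans_eq ?_
  simp [abs_walsh, card_hammingSphere]

lemma supp_one : supp (1 : BV n) = univ := by
  ext; simp [mem_supp]

lemma wt_add_one (v : BV n) : wt (v + 1) = n - wt v := by
  have : supp (v + 1) = (supp v)ᶜ := by
    ext i
    rcases ZMod.two_eq_zero_or_one (v i) with h | h <;> simp [mem_supp, h]
  rw [wt_eq_card_supp, this, card_compl, Fintype.card_fin, wt_eq_card_supp]

lemma walsh_one (x : BV n) : walsh x 1 = (-1) ^ wt x := by
  rw [walsh_eq_neg_one_pow, supp_one, inter_univ, wt_eq_card_supp]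

lemma abs_kraw_sub (w : ℕ) {i : ℕ} (hi : i ≤ n) : |Kraw n w (n - i)| = |Kraw n w i| := by
  obtain ⟨v, rfl⟩ := exists_wt_eq hi
  rw [← wt_add_one, ← sum_hammingSphere_walsh, ← sum_hammingSphere_walsh]
  have h : ∀ x ∈ hammingSphere n w, walsh x (v + 1) = (-1) ^ w * walsh x v := fun x hx => by
    rw [walsh_comm, walsh_add_left, walsh_comm, walsh_comm 1, walsh_one, mem_hammingSphere.mp hx,
      mul_comm]
  rw [sum_congr rfl h, ← mul_sum, abs_mul, abs_pow, abs_neg, abs_one, one_pow, one_mul]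

variable {w t : ℕ} {C0 B : ℝ}

lemma abs_kraw_le_of_lt (hC0 : 0 ≤ C0) (hB0 : 0 ≤ B) (hB1 : B ≤ 1)
    (hK : ∀ i : ℕ, (i : ℝ) ≤ n / 2 → |Kraw n w i| ≤ C0 * n.choose w * B ^ i) {i : ℕ}
    (hi : i ≤ n) (hti : t < i) (hti' : t < n - i) :
    |Kraw n w i| ≤ C0 * n.choose w * B ^ t := by
  have mono (j : ℕ) (hj : t ≤ j) : C0 * n.choose w * B ^ j ≤ C0 * n.choose w * B ^ t :=
    mul_le_mul_of_nonneg_left (pow_le_pow_of_le_one hB0 hB1 hj) (by positivity)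
  have half {j : ℕ} (hj : j * 2 ≤ n) : (j : ℝ) ≤ n / 2 := by
    rw [le_div_iff₀ two_pos]; exact_mod_cast hj
  rcases le_total (i * 2) n with h | h
  · exact (hK i (half h)).trans (mono i hti.le)
  · rw [← abs_kraw_sub w hi]
    exact (hK (n - i) (half (by omega))).trans (mono _ hti'.le)

lemma kraw_le_choose_mul (hC0 : 0 ≤ C0) (hB0 : 0 ≤ B) (hB1 : B ≤ 1)
    (hK : ∀ i : ℕ, (i : ℝ) ≤ n / 2 → |Kraw n w i| ≤ C0 * n.choose w * B ^ i) {i : ℕ}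
    (hi : i ≤ n) :
    Kraw n w i ≤
      n.choose w * ((if i ≤ t then 1 else 0) + (if n - i ≤ t then 1 else 0) + C0 * B ^ t) := by
  have hδ : 0 ≤ C0 * B ^ t := by positivity
  have hchoose : Kraw n w i ≤ n.choose w := (le_abs_self _).trans (abs_kraw_le_choose w hi)
  split_ifs with h1 h2 h2
  · nlinarith
  · nlinarith
  · nlinarith
  · have := abs_kraw_le_of_lt (t := t) hC0 hB0 hB1 hK hi (by omega) (by omega)
    linarith [le_abs_self (Kraw n w i)]

lemma two_pow_mul_FT (f : BV n → ℝ) (y : BV n) : 2 ^ n * FT f y = ∑ x, f x * walsh x y := by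
  rw [FT, ← mul_assoc, mul_one_div_cancel (by positivity), one_mul]
  rfl

lemma sum_hammingSphere_sq_FT (f : BV n → ℝ) (w : ℕ) :
    ∑ y ∈ hammingSphere n w, (2 ^ n * FT f y) ^ 2
      = ∑ z, ∑ z', f z * f z' * Kraw n w (wt (z + z')) := by
  simp_rw [two_pow_mul_FT, sq, sum_mul_sum, ← sum_hammingSphere_walsh, mul_sum]
  rw [sum_comm]
  refine sum_congr rfl fun z _ => ?_
  rw [sum_comm]
  refine sum_congr rfl fun z' _ => sum_congr rfl fun y _ => ?_
  rw [walsh_comm y, walsh_add_left]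
  ring

end Walsh

lemma sum_le_card_div_add_of_dTV_le {α : Type*} [Fintype α] [Nonempty α] {Q : α → ℝ}
    (hQ : ∑ x, Q x = 1) {ε : ℝ} (h : dTV Q (unif α) ≤ ε) (A : Finset α) :
    ∑ x ∈ A, Q x ≤ #A / Fintype.card α + ε := by
  set U := unif α
  have hUA : ∑ x ∈ A, U x = #A / Fintype.card α := by simp [U, unif, div_eq_mul_inv]
  have hU : ∑ x, U x = 1 := by simp [U, unif]
  have hsplit : ∑ x ∈ A, (Q x - U x) = -∑ x ∈ Aᶜ, (Q x - U x) := by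
    rw [eq_neg_iff_add_eq_zero, sum_add_sum_compl, sum_sub_distrib, hQ, hU, sub_self]
  have hA : ∑ x ∈ A, (Q x - U x) ≤ ∑ x ∈ A, |Q x - U x| := sum_le_sum fun _ _ => le_abs_self _
  have hAc : -∑ x ∈ Aᶜ, (Q x - U x) ≤ ∑ x ∈ Aᶜ, |Q x - U x| := by
    rw [← sum_neg_distrib]; exact sum_le_sum fun _ _ => neg_le_abs _
  have hsum := sum_add_sum_compl A fun x => |Q x - U x|
  rw [dTV] at h
  rw [← hUA, ← sub_le_iff_le_add', ← sum_sub_distrib]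
  linarith

section Pushforward

variable {k n : ℕ} {G : Matrix (Fin k) (Fin n) (ZMod 2)} {P : BV n → ℝ}

lemma sum_pmfMap (T : Finset (BV k)) :
    ∑ u ∈ T, pmfMap G P u = ∑ z with G *ᵥ z ∈ T, P z :=
  sum_fiberwise_eq_sum_filter _ _ _ _

lemma sum_pmfMap_eq_one (hP : ∑ z, P z = 1) : ∑ u, pmfMap G P u = 1 := by
  simpa [sum_pmfMap] using hP

lemma sum_filter_wt_add_le (hP : IsPMF P) {ε : ℝ} (h : dTV (pmfMap G P) (unif (BV k)) ≤ ε)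
    (t : ℕ) (u : BV n) :
    ∑ z with wt (z + u) ≤ t, P z ≤ Vball n t / 2 ^ k + ε := by
  set T := (hammingBall n t).image fun v => G *ᵥ (v + u)
  have hsub : ({z | wt (z + u) ≤ t} : Finset (BV n)) ⊆ ({z | G *ᵥ z ∈ T} : Finset (BV n)) := by
    intro z hz
    simp only [mem_filter, mem_univ, true_and] at hz ⊢
    exact mem_image.mpr
      ⟨z + u, mem_hammingBall.mpr hz, by simp only [add_assoc, BV.add_self, add_zero]⟩
  have hT : (#T : ℝ) ≤ Vball n t := by
    exact_mod_cast card_image_le.trans (card_hammingBall t).le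
  calc ∑ z with wt (z + u) ≤ t, P z
      ≤ ∑ z with G *ᵥ z ∈ T, P z := sum_le_sum_of_subset_of_nonneg hsub fun z _ _ => hP.1 z
    _ = ∑ s ∈ T, pmfMap G P s := (sum_pmfMap T).symm
    _ ≤ #T / Fintype.card (BV k) + ε :=
        sum_le_card_div_add_of_dTV_le (sum_pmfMap_eq_one hP.2) h T
    _ ≤ Vball n t / 2 ^ k + ε := by
      rw [Fintype.card_fun, ZMod.card, Fintype.card_fin, Nat.cast_pow, Nat.cast_ofNat]
      gcongr

lemma sum_sum_mul_ite_wt_le (hP : IsPMF P) {ε : ℝ} (h : dTV (pmfMap G P) (unif (BV k)) ≤ ε)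
    (t : ℕ) (a : BV n) :
    ∑ z, ∑ z', P z * P z' * (if wt (z + z' + a) ≤ t then 1 else 0) ≤ Vball n t / 2 ^ k + ε :=
  calc ∑ z, ∑ z', P z * P z' * (if wt (z + z' + a) ≤ t then 1 else 0)
      = ∑ z, P z * ∑ z' with wt (z' + (z + a)) ≤ t, P z' := by
        refine sum_congr rfl fun z _ => ?_
        rw [sum_filter, mul_sum]
        refine sum_congr rfl fun z' _ => ?_
        rw [add_comm z z', add_assoc]
        split_ifs <;> ring
    _ ≤ ∑ z, P z * (Vball n t / 2 ^ k + ε) :=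
        sum_le_sum fun z _ => mul_le_mul_of_nonneg_left (sum_filter_wt_add_le hP h t _) (hP.1 z)
    _ = Vball n t / 2 ^ k + ε := by rw [← sum_mul, hP.2, one_mul]

lemma sum_hammingSphere_sq_FT_le (hP : IsPMF P) {ε : ℝ}
    (h : dTV (pmfMap G P) (unif (BV k)) ≤ ε) {w t : ℕ} {δ : ℝ}
    (hKraw : ∀ i ≤ n, Kraw n w i ≤
      n.choose w * ((if i ≤ t then 1 else 0) + (if n - i ≤ t then 1 else 0) + δ)) :
    ∑ y ∈ hammingSphere n w, (2 ^ n * FT P y) ^ 2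
      ≤ n.choose w * (2 * (Vball n t / 2 ^ k + ε) + δ) := by
  set ind : BV n → ℝ := fun v => if wt v ≤ t then 1 else 0
  have hpair : ∑ z, ∑ z', P z * P z' = 1 := by rw [← sum_mul_sum, hP.2, one_mul]
  have h0 := sum_sum_mul_ite_wt_le hP h t 0
  have h1 := sum_sum_mul_ite_wt_le hP h t 1
  simp only [add_zero] at h0
  rw [sum_hammingSphere_sq_FT]
  calc ∑ z, ∑ z', P z * P z' * Kraw n w (wt (z + z'))
      ≤ ∑ z, ∑ z', n.choose w * (P z * P z' * ind (z + z') + P z * P z' * ind (z + z' + 1)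
          + δ * (P z * P z')) := by
        refine sum_le_sum fun z _ => sum_le_sum fun z' _ => ?_
        have := mul_le_mul_of_nonneg_left (hKraw _ (wt_le (z + z')))
          (mul_nonneg (hP.1 z) (hP.1 z'))
        simp only [ind, wt_add_one]
        linarith
    _ = n.choose w * (∑ z, ∑ z', P z * P z' * ind (z + z') +
          ∑ z, ∑ z', P z * P z' * ind (z + z' + 1) + δ * ∑ z, ∑ z', P z * P z') := by
        simp only [← mul_sum, sum_add_distrib]
    _ ≤ n.choose w * (2 * (Vball n t / 2 ^ k + ε) + δ) := by
        rw [hpair, mul_one]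
        gcongr
        linarith

end Pushforward

lemma ker_mulVecLin_subset_dualSet {k n : ℕ} (G : Matrix (Fin k) (Fin n) (ZMod 2)) :
    (LinearMap.ker G.mulVecLin : Set (BV n)) ⊆ dualSet (rowSpan G : Set (BV n)) := by
  intro y hy c hc
  obtain ⟨a, rfl⟩ : c ∈ LinearMap.range G.vecMulLinear := by
    rwa [range_vecMulLinear]
  change y ⬝ᵥ (a ᵥ* G) = 0
  have hy : G *ᵥ y = 0 := hy
  rw [dotProduct_comm, ← dotProduct_mulVec, hy, dotProduct_zero]

lemma two_pow_sub_le_card_dualSet {k n : ℕ} (G : Matrix (Fin k) (Fin n) (ZMod 2))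
    (hrank : G.rank = k) : 2 ^ (n - k) ≤ Nat.card (dualSet (rowSpan G : Set (BV n))) := by
  have hker : Module.finrank (ZMod 2) (LinearMap.ker G.mulVecLin) = n - k := by
    have := LinearMap.finrank_range_add_finrank_ker G.mulVecLin
    rw [← Matrix.rank, hrank, Module.finrank_fin_fun] at this
    omega
  calc 2 ^ (n - k) = Nat.card (LinearMap.ker G.mulVecLin) := by
        rw [Nat.card_eq_fintype_card, Module.card_eq_pow_finrank (K := ZMod 2), hker, ZMod.card]
    _ ≤ _ := Nat.card_mono (Set.toFinite _) (ker_mulVecLin_subset_dualSet G)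

lemma two_mul_div_two_pow_le {n k N : ℕ} (hkn : k ≤ n) (hn : 1 ≤ n) (hN : 2 ^ (n - k) ≤ N)
    {V : ℝ} (hV : 0 ≤ V) : 2 * (V / 2 ^ k) ≤ N * V / 2 ^ (n - 1) := by
  have h2n : (2 : ℝ) ^ (n - k) * 2 ^ k = 2 * 2 ^ (n - 1) := by
    rw [← pow_add, ← pow_succ']; congr 1; omega
  rw [mul_div_assoc', div_le_div_iff₀ (by positivity) (by positivity)]
  calc 2 * V * 2 ^ (n - 1) = (2 : ℝ) ^ (n - k) * V * 2 ^ k := by linear_combination V * h2n.symm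
    _ ≤ N * V * 2 ^ k := by gcongr; exact_mod_cast hN

theorem fourier_square_sum_bound_general (n k : ℕ) (c C0 : ℝ)
    (hc : c ∈ Set.Ioo (0 : ℝ) 1) (hC0 : 1 ≤ C0)
    (hK : ∀ w i : ℕ, (w : ℝ) ≤ c * n → (i : ℝ) ≤ (n : ℝ) / 2 →
      |Kraw n w i| ≤ C0 * (n.choose w : ℝ) * (1 - 2 * w / n) ^ i)
    (G : Matrix (Fin k) (Fin n) (ZMod 2)) (hrank : G.rank = k)
    (dperp : ℕ)
    (hdperp : IsLeast
      {m : ℕ | ∃ y ∈ dualSet ((rowSpan G : Submodule (ZMod 2) (BV n)) : Set (BV n)),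
        y ≠ 0 ∧ wt y = m} dperp)
    (hdn : (dperp : ℝ) < (n : ℝ) / 2)
    (w : ℕ) (hw : (w : ℝ) ≤ c * n) (ε : ℝ)
    (P : BV n → ℝ) (hP : IsPMF P)
    (ht : dTV (pmfMap G P) (unif (BV k)) ≤ ε) :
    (1 / (n.choose w : ℝ)) * ∑ x ∈ Finset.univ.filter (fun x : BV n => wt x = w),
        (2 ^ n * FT P x) ^ 2
      ≤ (Nat.card (dualSet ((rowSpan G : Submodule (ZMod 2) (BV n)) : Set (BV n))) : ℝ)
            * (Vball n ((dperp - 1) / 2) : ℝ) / 2 ^ (n - 1)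
        + C0 * n * (1 - 2 * w / n) ^ ((dperp - 1) / 2) + 2 * ε := by
  obtain ⟨⟨y, -, hy0, rfl⟩, -⟩ := hdperp
  have hn : 2 * wt y + 1 ≤ n := by
    have : (2 * wt y : ℝ) < n := by linarith
    exact_mod_cast this
  have hy := one_le_wt hy0
  have hn2 : (2 : ℝ) ≤ n := by exact_mod_cast (by omega : 2 ≤ n)
  have hwn : w ≤ n := by exact_mod_cast hw.trans (mul_le_of_le_one_left (by linarith) hc.2.le)
  have hchoose : (0 : ℝ) < n.choose w := by exact_mod_cast Nat.choose_pos hwn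
  set t := (wt y - 1) / 2
  set B := 1 - 2 * (w : ℝ) / n
  -- `hK` at `i = 1` bounds `0 ≤ |K_w(1)|` by a positive multiple of `B`
  have hB0 : 0 ≤ B := by
    have h1 := (abs_nonneg _).trans (hK w 1 hw (by push_cast; linarith))
    rw [pow_one] at h1
    exact nonneg_of_mul_nonneg_right h1 (by positivity)
  have hB1 : B ≤ 1 := sub_le_self _ (by positivity)
  have hsum := sum_hammingSphere_sq_FT_le hP ht (t := t) fun i hi =>
    kraw_le_choose_mul (by linarith) hB0 hB1 (fun i hi => hK w i hw hi) hi
  have hdual := two_mul_div_two_pow_le (hrank ▸ G.rank_le_width) (by omega)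
    (two_pow_sub_le_card_dualSet G hrank) (Nat.cast_nonneg (Vball n t))
  have hC0n : C0 * B ^ t ≤ C0 * n * B ^ t := by
    rw [mul_right_comm]; exact le_mul_of_one_le_right (by positivity) (by linarith)
  rw [one_div, inv_mul_le_iff₀ hchoose]
  refine hsum.trans (mul_le_mul_of_nonneg_left ?_ hchoose.le)
  linarith

theorem fourier_square_sum_bound (n k : ℕ) (c C0 : ℝ)
    (hc : c ∈ Set.Ioo (0 : ℝ) 1) (hC0 : 1 ≤ C0)
    (hK : ∀ w i : ℕ, (w : ℝ) ≤ c * n → (i : ℝ) ≤ (n : ℝ) / 2 →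
      |Kraw n w i| ≤ C0 * (n.choose w : ℝ) * (1 - 2 * w / n) ^ i)
    (G : Matrix (Fin k) (Fin n) (ZMod 2)) (hrank : G.rank = k)
    (dperp : ℕ)
    (hdperp : IsLeast
      {m : ℕ | ∃ y ∈ dualSet ((rowSpan G : Submodule (ZMod 2) (BV n)) : Set (BV n)),
        y ≠ 0 ∧ wt y = m} dperp)
    (hdn : (dperp : ℝ) < (n : ℝ) / 2)
    (w : ℕ) (hw : (w : ℝ) ≤ c * n) (ε : ℝ) (hε : 0 < ε)
    (P : BV n → ℝ) (hP : IsPMF P)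
    (ht : dTV (pmfMap G P) (unif (BV k)) ≤ ε) :
    (1 / (n.choose w : ℝ)) * ∑ x ∈ Finset.univ.filter (fun x : BV n => wt x = w),
        (2 ^ n * FT P x) ^ 2
      ≤ (Nat.card (dualSet ((rowSpan G : Submodule (ZMod 2) (BV n)) : Set (BV n))) : ℝ)
            * (Vball n ((dperp - 1) / 2) : ℝ) / 2 ^ (n - 1)
        + C0 * n * (1 - 2 * w / n) ^ ((dperp - 1) / 2) + 2 * ε :=
  fourier_square_sum_bound_general n k c C0 hc hC0 hK G hrank dperp hdperp hdn w hw ε P hP ht
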